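/- Let X be a type of variables, φ a Boolean formula over X given semantically as a predicate on assignments σ : X → Bool, and P ⊆ X. Suppose I₀, I₁, …, I_m is a finite sequence of subsets of X with I₀ = P such that for each k < m there exists a variable x_k ∈ I_k with I_{k+1} = I_k \ {x_k} and x_k is implicitly defined by I_k \ {x_k} for φ. Then I_m is an independent support of P for φ. (Soundness of the iterative variable-elimination procedure underlying SimpleSearch and IntegratedImplicit.) -/

import Mathlib

/-- `I` is an independent support of `P` for `φ`: any two solutions of `φ` that
agree on `I` also agree on `P`. -/
def IndepSupport {X : Type*} (φ : (X → Bool) → Prop) (I P : Set X) : Prop :=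
  ∀ σ₁ σ₂ : X → Bool, φ σ₁ → φ σ₂ → (∀ i ∈ I, σ₁ i = σ₂ i) → ∀ p ∈ P, σ₁ p = σ₂ p

/-- `x` is implicitly defined by `I` for `φ`: any two solutions of `φ` that agree
on `I` assign the same value to `x`. -/
def ImplicitlyDefined {X : Type*} (φ : (X → Bool) → Prop) (I : Set X) (x : X) : Prop :=
  ∀ σ₁ σ₂ : X → Bool, φ σ₁ → φ σ₂ → (∀ i ∈ I, σ₁ i = σ₂ i) → σ₁ x = σ₂ x

section

variable {X : Type*} {φ : (X → Bool) → Prop}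

theorem IndepSupport.of_subset {I P : Set X} (h : P ⊆ I) : IndepSupport φ I P :=
  fun _ _ _ _ hagree p hp => hagree p (h hp)

theorem IndepSupport.trans {I J P : Set X} (hIJ : IndepSupport φ I J)
    (hJP : IndepSupport φ J P) : IndepSupport φ I P :=
  fun σ₁ σ₂ h₁ h₂ hagree => hJP σ₁ σ₂ h₁ h₂ (hIJ σ₁ σ₂ h₁ h₂ hagree)

theorem ImplicitlyDefined.indepSupport_diff_singleton {S : Set X} {x : X}
    (hx : ImplicitlyDefined φ (S \ {x}) x) : IndepSupport φ (S \ {x}) S := by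
  intro σ₁ σ₂ h₁ h₂ hagree p hp
  rcases eq_or_ne p x with rfl | hne
  · exact hx σ₁ σ₂ h₁ h₂ hagree
  · exact hagree p ⟨hp, hne⟩

end

/-- Soundness of the iterative variable-elimination procedure: starting from
`I 0 = P` and repeatedly removing a variable `x_k ∈ I k` that is implicitly
defined by `I k \ {x_k}`, the final set `I m` is an independent support of `P`. -/
theorem iterative_elimination_sound {X : Type*} (φ : (X → Bool) → Prop)
    (P : Set X) (m : ℕ) (I : ℕ → Set X) (h0 : I 0 = P)
    (hstep : ∀ k < m, ∃ x ∈ I k,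
        I (k + 1) = I k \ {x} ∧ ImplicitlyDefined φ (I k \ {x}) x) :
    I m ⊆ P ∧ IndepSupport φ (I m) P := by
  induction m with
  | zero => exact h0 ▸ ⟨subset_rfl, IndepSupport.of_subset subset_rfl⟩
  | succ k ih =>
    obtain ⟨hsub, hind⟩ := ih fun j hj => hstep j (hj.trans k.lt_succ_self)
    obtain ⟨x, -, hnext, hx⟩ := hstep k k.lt_succ_self
    rw [hnext]
    exact ⟨Set.sdiff_subset.trans hsub, hx.indepSupport_diff_singleton.trans hind⟩
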